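/- arXiv:2211.11195 — 4 statements merged into one kernel-verified Lean document; each statement's English description precedes it below -/
import Mathlib

section
/- If C¹ functions x, p, p¹, p² : [0,T] → ℝⁿ and a continuous u : [0,T] → ℝᵐ solve the system det-(CC-MT), then p(t) = p¹(t) + p²(t) for all t ∈ [0,T], and the triple (x, u, p) solves the system det-(H-MC). (Deterministic, zero-noise version of one direction of Lemma 5.1: the consistency-condition system of the mean-field team problem implies the Hamiltonian system of the mean-field control problem.) -/
/-! The backward adjoint `p` of the team problem and the sum `p¹ + p²` of the two team adjoints
solve the same linear terminal-value problem: their difference `w` satisfies `w' = -Aᵀ w` with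
`w(T) = 0`, because the running and terminal weights of `p` split as
`(I - Γ)ᵀ M (I - Γ) = M + (ΓᵀMΓ - ΓᵀM - MΓ)`. Uniqueness for linear ODEs with continuous
coefficients gives `w = 0`, and substituting `p = p¹ + p²` turns det-(CC-MT) into det-(H-MC). -/

open Matrix Set

theorem linearODE_eqOn_zero_of_right_eq_zero {E : Type*} [NormedAddCommGroup E]
    [NormedSpace ℝ E] {a b : ℝ} {M : ℝ → E →L[ℝ] E} {w : ℝ → E}
    (hM : ContinuousOn M (Icc a b))
    (hw : ∀ t ∈ Icc a b, HasDerivWithinAt w (M t (w t)) (Icc a b) t) (hwb : w b = 0) :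
    EqOn w 0 (Icc a b) := by
  obtain ⟨C, hC⟩ := isCompact_Icc.exists_bound_of_continuousOn hM
  have hlip : ∀ t ∈ Ioc a b, LipschitzOnWith C.toNNReal (M t) univ := fun t ht =>
    ((M t).lipschitz.weaken (by
      rw [← NNReal.coe_le_coe, coe_nnnorm]
      exact (hC t (Ioc_subset_Icc_self ht)).trans (Real.le_coe_toNNReal C))).lipschitzOnWith
  have hw_left : ∀ t ∈ Ioc a b, HasDerivWithinAt w (M t (w t)) (Iic t) t := fun t ht =>
    (hw t (Ioc_subset_Icc_self ht)).mono_of_mem_nhdsWithin (Icc_mem_nhdsLE_of_mem ht)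
  refine ODE_solution_unique_of_mem_Icc_left hlip
    (fun t ht => (hw t ht).continuousWithinAt) hw_left (fun _ _ => mem_univ _)
    continuousOn_const (fun t _ => ?_) (fun _ _ => mem_univ _) hwb
  simpa only [Pi.zero_apply, map_zero] using hasDerivWithinAt_zero (F := E) (x := t) (s := Iic t)

theorem Matrix.linearODE_eqOn_zero_of_right_eq_zero {ι : Type*} [Fintype ι] [DecidableEq ι]
    {a b : ℝ} {M : ℝ → Matrix ι ι ℝ} {w : ℝ → ι → ℝ} (hM : ContinuousOn M (Icc a b))
    (hw : ∀ t ∈ Icc a b, HasDerivWithinAt w (M t *ᵥ w t) (Icc a b) t) (hwb : w b = 0) :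
    EqOn w 0 (Icc a b) := by
  let toCLM : Matrix ι ι ℝ →ₗ[ℝ] (ι → ℝ) →L[ℝ] (ι → ℝ) :=
    LinearMap.toContinuousLinearMap.toLinearMap ∘ₗ Matrix.toLin'.toLinearMap
  exact _root_.linearODE_eqOn_zero_of_right_eq_zero (M := fun t => toCLM (M t))
    ((LinearMap.continuous_of_finiteDimensional toCLM).comp_continuousOn hM) hw hwb

theorem Matrix.one_sub_transpose_mul_mul_one_sub {ι R : Type*} [Fintype ι] [DecidableEq ι]
    [Ring R] (Γ M : Matrix ι ι R) :
    (1 - Γ)ᵀ * M * (1 - Γ) = M + (Γᵀ * M * Γ - Γᵀ * M - M * Γ) := by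
  simp only [transpose_sub, transpose_one, sub_mul, mul_sub, one_mul, mul_one]
  abel

theorem stmt_1_general {n m : ℕ} (T : ℝ) (x₀ : Fin n → ℝ)
    (A Abar Q Γ₁ : ℝ → Matrix (Fin n) (Fin n) ℝ)
    (B Bbar : ℝ → Matrix (Fin n) (Fin m) ℝ)
    (R : ℝ → Matrix (Fin m) (Fin m) ℝ)
    (hA : ContinuousOn A (Icc 0 T))
    (G Γ₂ : Matrix (Fin n) (Fin n) ℝ)
    (x p p1 p2 : ℝ → Fin n → ℝ) (u : ℝ → Fin m → ℝ)
    -- state equation: x' = 𝒜 x + ℬ u, x(0) = x₀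
    (hx0 : x 0 = x₀)
    (hx : ∀ t ∈ Icc (0 : ℝ) T,
      HasDerivWithinAt x ((A t + Abar t) *ᵥ x t + (B t + Bbar t) *ᵥ u t) (Icc 0 T) t)
    -- adjoint p¹: (p¹)' = −(Q x + Aᵀ p¹), p¹(T) = G x(T)
    (hp1 : ∀ t ∈ Icc (0 : ℝ) T,
      HasDerivWithinAt p1 (-(Q t *ᵥ x t + (A t)ᵀ *ᵥ p1 t)) (Icc 0 T) t)
    (hp1T : p1 T = G *ᵥ x T)
    -- adjoint p²: (p²)' = −((Γ₁ᵀQΓ₁ − Γ₁ᵀQ − QΓ₁) x + Āᵀ p¹ + 𝒜ᵀ p²)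
    (hp2 : ∀ t ∈ Icc (0 : ℝ) T,
      HasDerivWithinAt p2
        (-(((Γ₁ t)ᵀ * Q t * Γ₁ t - (Γ₁ t)ᵀ * Q t - Q t * Γ₁ t) *ᵥ x t
          + (Abar t)ᵀ *ᵥ p1 t + (A t + Abar t)ᵀ *ᵥ p2 t)) (Icc 0 T) t)
    (hp2T : p2 T = (Γ₂ᵀ * G * Γ₂ - Γ₂ᵀ * G - G * Γ₂) *ᵥ x T)
    -- adjoint p: p' = −(Q̂ x + Aᵀ p + Āᵀ (p¹ + p²)), p(T) = Ĝ x(T)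
    (hp : ∀ t ∈ Icc (0 : ℝ) T,
      HasDerivWithinAt p
        (-(((1 - Γ₁ t)ᵀ * Q t * (1 - Γ₁ t)) *ᵥ x t + (A t)ᵀ *ᵥ p t
          + (Abar t)ᵀ *ᵥ (p1 t + p2 t))) (Icc 0 T) t)
    (hpT : p T = ((1 - Γ₂)ᵀ * G * (1 - Γ₂)) *ᵥ x T)
    -- stationarity: R u + Bᵀ p + B̄ᵀ (p¹ + p²) = 0
    (hstat : ∀ t ∈ Icc (0 : ℝ) T,
      R t *ᵥ u t + (B t)ᵀ *ᵥ p t + (Bbar t)ᵀ *ᵥ (p1 t + p2 t) = 0) :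
    -- conclusion: p = p¹ + p² and (x, u, p) solves det-(H-MC)
    (∀ t ∈ Icc (0 : ℝ) T, p t = p1 t + p2 t) ∧
    x 0 = x₀ ∧
    (∀ t ∈ Icc (0 : ℝ) T,
      HasDerivWithinAt x ((A t + Abar t) *ᵥ x t + (B t + Bbar t) *ᵥ u t) (Icc 0 T) t) ∧
    (∀ t ∈ Icc (0 : ℝ) T,
      HasDerivWithinAt p
        (-(((1 - Γ₁ t)ᵀ * Q t * (1 - Γ₁ t)) *ᵥ x t + (A t + Abar t)ᵀ *ᵥ p t)) (Icc 0 T) t) ∧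
    p T = ((1 - Γ₂)ᵀ * G * (1 - Γ₂)) *ᵥ x T ∧
    (∀ t ∈ Icc (0 : ℝ) T, R t *ᵥ u t + (B t + Bbar t)ᵀ *ᵥ p t = 0) := by
  have hdiff : ∀ t ∈ Icc (0 : ℝ) T, HasDerivWithinAt (fun s => p s - (p1 s + p2 s))
      (-(A t)ᵀ *ᵥ (p t - (p1 t + p2 t))) (Icc 0 T) t := fun t ht => by
    refine ((hp t ht).sub ((hp1 t ht).add (hp2 t ht))).congr_deriv ?_
    simp only [one_sub_transpose_mul_mul_one_sub, neg_mulVec, mulVec_sub, mulVec_add, add_mulVec,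
      sub_mulVec, transpose_add]
    abel
  have hdiff_T : p T - (p1 T + p2 T) = 0 := by
    simp only [hpT, hp1T, hp2T, one_sub_transpose_mul_mul_one_sub, add_mulVec]
    abel
  have hpeq : ∀ t ∈ Icc (0 : ℝ) T, p t = p1 t + p2 t := fun t ht =>
    sub_eq_zero.mp (Matrix.linearODE_eqOn_zero_of_right_eq_zero
      (continuous_id.matrix_transpose.comp_continuousOn hA).neg hdiff hdiff_T ht)
  refine ⟨hpeq, hx0, hx, fun t ht => ?_, hpT, fun t ht => ?_⟩
  · refine (hp t ht).congr_deriv ?_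
    rw [← hpeq t ht, transpose_add, add_mulVec, add_assoc]
  · rw [← hstat t ht, ← hpeq t ht, transpose_add, add_mulVec, add_assoc]

/-- Deterministic (zero-noise) version of one direction of Lemma 5.1: a solution of the
consistency-condition system det-(CC-MT) of the mean-field team problem satisfies
`p = p¹ + p²` and `(x, u, p)` solves the Hamiltonian system det-(H-MC) of the
mean-field control problem. -/
theorem stmt_1 {n m : ℕ} (T : ℝ) (hT : 0 < T) (x₀ : Fin n → ℝ)
    (A Abar Q Γ₁ : ℝ → Matrix (Fin n) (Fin n) ℝ)
    (B Bbar : ℝ → Matrix (Fin n) (Fin m) ℝ)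
    (R : ℝ → Matrix (Fin m) (Fin m) ℝ)
    (hA : ContinuousOn A (Icc 0 T)) (hAbar : ContinuousOn Abar (Icc 0 T))
    (hQ : ContinuousOn Q (Icc 0 T)) (hΓ₁ : ContinuousOn Γ₁ (Icc 0 T))
    (hB : ContinuousOn B (Icc 0 T)) (hBbar : ContinuousOn Bbar (Icc 0 T))
    (hR : ContinuousOn R (Icc 0 T))
    (hQsymm : ∀ t, (Q t)ᵀ = Q t) (hRsymm : ∀ t, (R t)ᵀ = R t)
    (G Γ₂ : Matrix (Fin n) (Fin n) ℝ) (hGsymm : Gᵀ = G)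
    (x p p1 p2 : ℝ → Fin n → ℝ) (u : ℝ → Fin m → ℝ)
    (hu : ContinuousOn u (Icc 0 T))
    -- state equation: x' = 𝒜 x + ℬ u, x(0) = x₀
    (hx0 : x 0 = x₀)
    (hx : ∀ t ∈ Icc (0 : ℝ) T,
      HasDerivWithinAt x ((A t + Abar t) *ᵥ x t + (B t + Bbar t) *ᵥ u t) (Icc 0 T) t)
    -- adjoint p¹: (p¹)' = −(Q x + Aᵀ p¹), p¹(T) = G x(T)
    (hp1 : ∀ t ∈ Icc (0 : ℝ) T,
      HasDerivWithinAt p1 (-(Q t *ᵥ x t + (A t)ᵀ *ᵥ p1 t)) (Icc 0 T) t)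
    (hp1T : p1 T = G *ᵥ x T)
    -- adjoint p²: (p²)' = −((Γ₁ᵀQΓ₁ − Γ₁ᵀQ − QΓ₁) x + Āᵀ p¹ + 𝒜ᵀ p²)
    (hp2 : ∀ t ∈ Icc (0 : ℝ) T,
      HasDerivWithinAt p2
        (-(((Γ₁ t)ᵀ * Q t * Γ₁ t - (Γ₁ t)ᵀ * Q t - Q t * Γ₁ t) *ᵥ x t
          + (Abar t)ᵀ *ᵥ p1 t + (A t + Abar t)ᵀ *ᵥ p2 t)) (Icc 0 T) t)
    (hp2T : p2 T = (Γ₂ᵀ * G * Γ₂ - Γ₂ᵀ * G - G * Γ₂) *ᵥ x T)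
    -- adjoint p: p' = −(Q̂ x + Aᵀ p + Āᵀ (p¹ + p²)), p(T) = Ĝ x(T)
    (hp : ∀ t ∈ Icc (0 : ℝ) T,
      HasDerivWithinAt p
        (-(((1 - Γ₁ t)ᵀ * Q t * (1 - Γ₁ t)) *ᵥ x t + (A t)ᵀ *ᵥ p t
          + (Abar t)ᵀ *ᵥ (p1 t + p2 t))) (Icc 0 T) t)
    (hpT : p T = ((1 - Γ₂)ᵀ * G * (1 - Γ₂)) *ᵥ x T)
    -- stationarity: R u + Bᵀ p + B̄ᵀ (p¹ + p²) = 0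
    (hstat : ∀ t ∈ Icc (0 : ℝ) T,
      R t *ᵥ u t + (B t)ᵀ *ᵥ p t + (Bbar t)ᵀ *ᵥ (p1 t + p2 t) = 0) :
    -- conclusion: p = p¹ + p² and (x, u, p) solves det-(H-MC)
    (∀ t ∈ Icc (0 : ℝ) T, p t = p1 t + p2 t) ∧
    x 0 = x₀ ∧
    (∀ t ∈ Icc (0 : ℝ) T,
      HasDerivWithinAt x ((A t + Abar t) *ᵥ x t + (B t + Bbar t) *ᵥ u t) (Icc 0 T) t) ∧
    (∀ t ∈ Icc (0 : ℝ) T,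
      HasDerivWithinAt p
        (-(((1 - Γ₁ t)ᵀ * Q t * (1 - Γ₁ t)) *ᵥ x t + (A t + Abar t)ᵀ *ᵥ p t)) (Icc 0 T) t) ∧
    p T = ((1 - Γ₂)ᵀ * G * (1 - Γ₂)) *ᵥ x T ∧
    (∀ t ∈ Icc (0 : ℝ) T, R t *ᵥ u t + (B t + Bbar t)ᵀ *ᵥ p t = 0) :=
  stmt_1_general T x₀ A Abar Q Γ₁ B Bbar R hA G Γ₂ x p p1 p2 u hx0 hx hp1 hp1T hp2 hp2T hp hpT hstat
end

section
/- Suppose C¹ functions x, k : [0,T] → ℝⁿ and a continuous u : [0,T] → ℝᵐ solve the system det-(H-MC), and let p¹ : [0,T] → ℝⁿ be any C¹ solution of the linear backward equation (p¹)' = −(Q x + Aᵀ p¹) on [0,T] with p¹(T) = G x(T). Then, setting p := k and p² := k − p¹, the tuple (x, u, p, p¹, p²) solves the system det-(CC-MT). (Deterministic, zero-noise version of the converse direction of Lemma 5.1.) -/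
open Matrix Set

theorem Matrix.transpose_one_sub_mul_mul_one_sub_sub {ι R : Type*} [Fintype ι] [DecidableEq ι]
    [Ring R] (M N : Matrix ι ι R) :
    (1 - M)ᵀ * N * (1 - M) - N = Mᵀ * N * M - Mᵀ * N - N * M := by
  simp only [transpose_sub, transpose_one, Matrix.sub_mul, Matrix.mul_sub, Matrix.one_mul,
    Matrix.mul_one]
  abel

theorem stmt_2_general {n m : ℕ} (T : ℝ)
    (A Abar Q Γ₁ : ℝ → Matrix (Fin n) (Fin n) ℝ)
    (B Bbar : ℝ → Matrix (Fin n) (Fin m) ℝ)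
    (R : ℝ → Matrix (Fin m) (Fin m) ℝ)
    (G Γ₂ : Matrix (Fin n) (Fin n) ℝ)
    (x k p1 : ℝ → Fin n → ℝ) (u : ℝ → Fin m → ℝ)
    -- det-(H-MC): k' = −(Q̂ x + 𝒜ᵀ k), k(T) = Ĝ x(T)
    (hk : ∀ t ∈ Icc (0 : ℝ) T,
      HasDerivWithinAt k
        (-(((1 - Γ₁ t)ᵀ * Q t * (1 - Γ₁ t)) *ᵥ x t + (A t + Abar t)ᵀ *ᵥ k t)) (Icc 0 T) t)
    (hkT : k T = ((1 - Γ₂)ᵀ * G * (1 - Γ₂)) *ᵥ x T)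
    -- det-(H-MC): stationarity R u + ℬᵀ k = 0
    (hstat : ∀ t ∈ Icc (0 : ℝ) T, R t *ᵥ u t + (B t + Bbar t)ᵀ *ᵥ k t = 0)
    -- auxiliary backward equation for p¹: (p¹)' = −(Q x + Aᵀ p¹), p¹(T) = G x(T)
    (hp1 : ∀ t ∈ Icc (0 : ℝ) T,
      HasDerivWithinAt p1 (-(Q t *ᵥ x t + (A t)ᵀ *ᵥ p1 t)) (Icc 0 T) t)
    (hp1T : p1 T = G *ᵥ x T) :
    -- conclusion: with p := k, p² := k − p¹, the tuple (x, u, p, p¹, p²) solves det-(CC-MT)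
    (∀ t ∈ Icc (0 : ℝ) T,
      HasDerivWithinAt (fun s => k s - p1 s)
        (-(((Γ₁ t)ᵀ * Q t * Γ₁ t - (Γ₁ t)ᵀ * Q t - Q t * Γ₁ t) *ᵥ x t
          + (Abar t)ᵀ *ᵥ p1 t + (A t + Abar t)ᵀ *ᵥ (k t - p1 t))) (Icc 0 T) t) ∧
    k T - p1 T = (Γ₂ᵀ * G * Γ₂ - Γ₂ᵀ * G - G * Γ₂) *ᵥ x T ∧
    (∀ t ∈ Icc (0 : ℝ) T,
      HasDerivWithinAt k
        (-(((1 - Γ₁ t)ᵀ * Q t * (1 - Γ₁ t)) *ᵥ x t + (A t)ᵀ *ᵥ k t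
          + (Abar t)ᵀ *ᵥ (p1 t + (k t - p1 t)))) (Icc 0 T) t) ∧
    k T = ((1 - Γ₂)ᵀ * G * (1 - Γ₂)) *ᵥ x T ∧
    (∀ t ∈ Icc (0 : ℝ) T,
      R t *ᵥ u t + (B t)ᵀ *ᵥ k t + (Bbar t)ᵀ *ᵥ (p1 t + (k t - p1 t)) = 0) := by
  refine ⟨fun t ht => ?_, ?_, fun t ht => ?_, hkT, fun t ht => ?_⟩
  · refine ((hk t ht).sub (hp1 t ht)).congr_deriv ?_
    rw [← transpose_one_sub_mul_mul_one_sub_sub]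
    simp only [sub_mulVec, add_mulVec, transpose_add, mulVec_sub]
    abel
  · rw [hkT, hp1T, ← sub_mulVec, transpose_one_sub_mul_mul_one_sub_sub]
  · simpa only [add_sub_cancel, transpose_add, add_mulVec, add_assoc] using hk t ht
  · simpa only [add_sub_cancel, transpose_add, add_mulVec, add_assoc] using hstat t ht

/-- Deterministic (zero-noise) version of the converse direction of Lemma 5.1: every
solution `(x, u, k)` of the Hamiltonian system det-(H-MC), together with any solution
`p¹` of the auxiliary linear backward equation, yields a solution
`(x, u, p := k, p¹, p² := k − p¹)` of the consistency system det-(CC-MT). -/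
theorem stmt_2 {n m : ℕ} (T : ℝ) (hT : 0 < T) (x₀ : Fin n → ℝ)
    (A Abar Q Γ₁ : ℝ → Matrix (Fin n) (Fin n) ℝ)
    (B Bbar : ℝ → Matrix (Fin n) (Fin m) ℝ)
    (R : ℝ → Matrix (Fin m) (Fin m) ℝ)
    (hA : ContinuousOn A (Icc 0 T)) (hAbar : ContinuousOn Abar (Icc 0 T))
    (hQ : ContinuousOn Q (Icc 0 T)) (hΓ₁ : ContinuousOn Γ₁ (Icc 0 T))
    (hB : ContinuousOn B (Icc 0 T)) (hBbar : ContinuousOn Bbar (Icc 0 T))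
    (hR : ContinuousOn R (Icc 0 T))
    (hQsymm : ∀ t, (Q t)ᵀ = Q t) (hRsymm : ∀ t, (R t)ᵀ = R t)
    (G Γ₂ : Matrix (Fin n) (Fin n) ℝ) (hGsymm : Gᵀ = G)
    (x k p1 : ℝ → Fin n → ℝ) (u : ℝ → Fin m → ℝ)
    (hu : ContinuousOn u (Icc 0 T))
    -- det-(H-MC): state equation x' = 𝒜 x + ℬ u, x(0) = x₀
    (hx0 : x 0 = x₀)
    (hx : ∀ t ∈ Icc (0 : ℝ) T,
      HasDerivWithinAt x ((A t + Abar t) *ᵥ x t + (B t + Bbar t) *ᵥ u t) (Icc 0 T) t)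
    -- det-(H-MC): k' = −(Q̂ x + 𝒜ᵀ k), k(T) = Ĝ x(T)
    (hk : ∀ t ∈ Icc (0 : ℝ) T,
      HasDerivWithinAt k
        (-(((1 - Γ₁ t)ᵀ * Q t * (1 - Γ₁ t)) *ᵥ x t + (A t + Abar t)ᵀ *ᵥ k t)) (Icc 0 T) t)
    (hkT : k T = ((1 - Γ₂)ᵀ * G * (1 - Γ₂)) *ᵥ x T)
    -- det-(H-MC): stationarity R u + ℬᵀ k = 0
    (hstat : ∀ t ∈ Icc (0 : ℝ) T, R t *ᵥ u t + (B t + Bbar t)ᵀ *ᵥ k t = 0)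
    -- auxiliary backward equation for p¹: (p¹)' = −(Q x + Aᵀ p¹), p¹(T) = G x(T)
    (hp1 : ∀ t ∈ Icc (0 : ℝ) T,
      HasDerivWithinAt p1 (-(Q t *ᵥ x t + (A t)ᵀ *ᵥ p1 t)) (Icc 0 T) t)
    (hp1T : p1 T = G *ᵥ x T) :
    -- conclusion: with p := k, p² := k − p¹, the tuple (x, u, p, p¹, p²) solves det-(CC-MT)
    (∀ t ∈ Icc (0 : ℝ) T,
      HasDerivWithinAt (fun s => k s - p1 s)
        (-(((Γ₁ t)ᵀ * Q t * Γ₁ t - (Γ₁ t)ᵀ * Q t - Q t * Γ₁ t) *ᵥ x t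
          + (Abar t)ᵀ *ᵥ p1 t + (A t + Abar t)ᵀ *ᵥ (k t - p1 t))) (Icc 0 T) t) ∧
    k T - p1 T = (Γ₂ᵀ * G * Γ₂ - Γ₂ᵀ * G - G * Γ₂) *ᵥ x T ∧
    (∀ t ∈ Icc (0 : ℝ) T,
      HasDerivWithinAt k
        (-(((1 - Γ₁ t)ᵀ * Q t * (1 - Γ₁ t)) *ᵥ x t + (A t)ᵀ *ᵥ k t
          + (Abar t)ᵀ *ᵥ (p1 t + (k t - p1 t)))) (Icc 0 T) t) ∧
    k T = ((1 - Γ₂)ᵀ * G * (1 - Γ₂)) *ᵥ x T ∧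
    (∀ t ∈ Icc (0 : ℝ) T,
      R t *ᵥ u t + (B t)ᵀ *ᵥ k t + (Bbar t)ᵀ *ᵥ (p1 t + (k t - p1 t)) = 0) :=
  stmt_2_general T A Abar Q Γ₁ B Bbar R G Γ₂ x k p1 u hk hkT hstat hp1 hp1T
end

section
/- Assume Ā(t) = 0 and B̄(t) = 0 for all t, that Γ₁(t)ᵀQ(t) = Γ₁(t)ᵀQ(t)Γ₁(t) for all t ∈ [0,T], and that Γ₂ᵀG = Γ₂ᵀGΓ₂ (these hold, e.g., when Γ₁ = Γ₂ = I or Γ₁ = Γ₂ = 0). Then a triple (x, u, l), with x, l ∈ C¹([0,T]; ℝⁿ) and u : [0,T] → ℝᵐ continuous, solves the system det-(CC-MG) if and only if it solves the system det-(H-MC). (Deterministic, zero-noise version of Lemma 4.1: under these conditions the consistency-condition system of the mean-field game and the Hamiltonian system of the mean-field control problem are identical.) -/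
open Matrix Set

theorem Matrix.transpose_one_sub_mul_mul_one_sub {ι α : Type*} [Fintype ι] [DecidableEq ι]
    [Ring α] (Q P : Matrix ι ι α) (h : Pᵀ * Q = Pᵀ * Q * P) :
    (1 - P)ᵀ * Q * (1 - P) = Q - Q * P := by
  have expand : (1 - P)ᵀ * Q * (1 - P) = Q - Q * P - (Pᵀ * Q - Pᵀ * Q * P) := by
    simp only [transpose_sub, transpose_one, sub_mul, mul_sub, one_mul, mul_one]
    abel
  rw [expand, sub_eq_zero_of_eq h, sub_zero]

theorem stmt_3_general {n m : ℕ} (T : ℝ) (x₀ : Fin n → ℝ)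
    (A Abar Q Γ₁ : ℝ → Matrix (Fin n) (Fin n) ℝ)
    (B Bbar : ℝ → Matrix (Fin n) (Fin m) ℝ)
    (R : ℝ → Matrix (Fin m) (Fin m) ℝ)
    (G Γ₂ : Matrix (Fin n) (Fin n) ℝ)
    -- vanishing mean-field coefficients
    (hAbar0 : ∀ t, Abar t = 0) (hBbar0 : ∀ t, Bbar t = 0)
    -- structural conditions on the weights (e.g. Γ₁ = Γ₂ = I or Γ₁ = Γ₂ = 0)
    (hΓ₁Q : ∀ t ∈ Icc (0 : ℝ) T, (Γ₁ t)ᵀ * Q t = (Γ₁ t)ᵀ * Q t * Γ₁ t)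
    (hΓ₂G : Γ₂ᵀ * G = Γ₂ᵀ * G * Γ₂)
    (x l : ℝ → Fin n → ℝ) (u : ℝ → Fin m → ℝ) :
    -- det-(CC-MG)
    (x 0 = x₀ ∧
      (∀ t ∈ Icc (0 : ℝ) T,
        HasDerivWithinAt x (A t *ᵥ x t + B t *ᵥ u t) (Icc 0 T) t) ∧
      (∀ t ∈ Icc (0 : ℝ) T,
        HasDerivWithinAt l (-((A t)ᵀ *ᵥ l t + Q t *ᵥ x t - (Q t * Γ₁ t) *ᵥ x t)) (Icc 0 T) t) ∧
      l T = G *ᵥ x T - (G * Γ₂) *ᵥ x T ∧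
      (∀ t ∈ Icc (0 : ℝ) T, (B t)ᵀ *ᵥ l t + R t *ᵥ u t = 0))
    ↔
    -- det-(H-MC)
    (x 0 = x₀ ∧
      (∀ t ∈ Icc (0 : ℝ) T,
        HasDerivWithinAt x ((A t + Abar t) *ᵥ x t + (B t + Bbar t) *ᵥ u t) (Icc 0 T) t) ∧
      (∀ t ∈ Icc (0 : ℝ) T,
        HasDerivWithinAt l
          (-(((1 - Γ₁ t)ᵀ * Q t * (1 - Γ₁ t)) *ᵥ x t + (A t + Abar t)ᵀ *ᵥ l t)) (Icc 0 T) t) ∧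
      l T = ((1 - Γ₂)ᵀ * G * (1 - Γ₂)) *ᵥ x T ∧
      (∀ t ∈ Icc (0 : ℝ) T, R t *ᵥ u t + (B t + Bbar t)ᵀ *ᵥ l t = 0)) := by
  have costate_eq : ∀ t ∈ Icc (0 : ℝ) T,
      -(((1 - Γ₁ t)ᵀ * Q t * (1 - Γ₁ t)) *ᵥ x t + (A t)ᵀ *ᵥ l t)
        = -((A t)ᵀ *ᵥ l t + Q t *ᵥ x t - (Q t * Γ₁ t) *ᵥ x t) := fun t ht => by
    rw [transpose_one_sub_mul_mul_one_sub _ _ (hΓ₁Q t ht), sub_mulVec]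
    abel
  simp only [hAbar0, hBbar0, add_zero, transpose_one_sub_mul_mul_one_sub G Γ₂ hΓ₂G, sub_mulVec]
  refine and_congr_right' (and_congr_right' (and_congr ?_ (and_congr_right' ?_)))
  · exact forall₂_congr fun t ht => by rw [costate_eq t ht]
  · exact forall₂_congr fun t _ => by rw [add_comm]

/-- Deterministic (zero-noise) version of Lemma 4.1: when `Ā = B̄ = 0`,
`Γ₁ᵀQ = Γ₁ᵀQΓ₁` and `Γ₂ᵀG = Γ₂ᵀGΓ₂`, a triple `(x, u, l)` solves the consistency
system det-(CC-MG) of the mean-field game iff it solves the Hamiltonian system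
det-(H-MC) of the mean-field control problem. -/
theorem stmt_3 {n m : ℕ} (T : ℝ) (hT : 0 < T) (x₀ : Fin n → ℝ)
    (A Abar Q Γ₁ : ℝ → Matrix (Fin n) (Fin n) ℝ)
    (B Bbar : ℝ → Matrix (Fin n) (Fin m) ℝ)
    (R : ℝ → Matrix (Fin m) (Fin m) ℝ)
    (hA : ContinuousOn A (Icc 0 T)) (hQ : ContinuousOn Q (Icc 0 T))
    (hΓ₁ : ContinuousOn Γ₁ (Icc 0 T)) (hB : ContinuousOn B (Icc 0 T))
    (hR : ContinuousOn R (Icc 0 T))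
    (hQsymm : ∀ t, (Q t)ᵀ = Q t) (hRsymm : ∀ t, (R t)ᵀ = R t)
    (G Γ₂ : Matrix (Fin n) (Fin n) ℝ) (hGsymm : Gᵀ = G)
    -- vanishing mean-field coefficients
    (hAbar0 : ∀ t, Abar t = 0) (hBbar0 : ∀ t, Bbar t = 0)
    -- structural conditions on the weights (e.g. Γ₁ = Γ₂ = I or Γ₁ = Γ₂ = 0)
    (hΓ₁Q : ∀ t ∈ Icc (0 : ℝ) T, (Γ₁ t)ᵀ * Q t = (Γ₁ t)ᵀ * Q t * Γ₁ t)
    (hΓ₂G : Γ₂ᵀ * G = Γ₂ᵀ * G * Γ₂)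
    (x l : ℝ → Fin n → ℝ) (u : ℝ → Fin m → ℝ) (hu : ContinuousOn u (Icc 0 T)) :
    -- det-(CC-MG)
    (x 0 = x₀ ∧
      (∀ t ∈ Icc (0 : ℝ) T,
        HasDerivWithinAt x (A t *ᵥ x t + B t *ᵥ u t) (Icc 0 T) t) ∧
      (∀ t ∈ Icc (0 : ℝ) T,
        HasDerivWithinAt l (-((A t)ᵀ *ᵥ l t + Q t *ᵥ x t - (Q t * Γ₁ t) *ᵥ x t)) (Icc 0 T) t) ∧
      l T = G *ᵥ x T - (G * Γ₂) *ᵥ x T ∧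
      (∀ t ∈ Icc (0 : ℝ) T, (B t)ᵀ *ᵥ l t + R t *ᵥ u t = 0))
    ↔
    -- det-(H-MC)
    (x 0 = x₀ ∧
      (∀ t ∈ Icc (0 : ℝ) T,
        HasDerivWithinAt x ((A t + Abar t) *ᵥ x t + (B t + Bbar t) *ᵥ u t) (Icc 0 T) t) ∧
      (∀ t ∈ Icc (0 : ℝ) T,
        HasDerivWithinAt l
          (-(((1 - Γ₁ t)ᵀ * Q t * (1 - Γ₁ t)) *ᵥ x t + (A t + Abar t)ᵀ *ᵥ l t)) (Icc 0 T) t) ∧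
      l T = ((1 - Γ₂)ᵀ * G * (1 - Γ₂)) *ᵥ x T ∧
      (∀ t ∈ Icc (0 : ℝ) T, R t *ᵥ u t + (B t + Bbar t)ᵀ *ᵥ l t = 0)) :=
  stmt_3_general T x₀ A Abar Q Γ₁ B Bbar R G Γ₂ hAbar0 hBbar0 hΓ₁Q hΓ₂G x l u
end

section
/- Assume ⟨Q̂(t)v, v⟩ ≥ 0 for all t and v ∈ ℝⁿ, ⟨Ĝv, v⟩ ≥ 0 for all v ∈ ℝⁿ, and there is ε > 0 with ⟨R(t)w, w⟩ ≥ ε‖w‖² for all t and w ∈ ℝᵐ. If (x, u, p, p¹, p²) solves the system det-(CC-MT) with initial value x₀, then u is the unique minimizer, over all continuous controls v : [0,T] → ℝᵐ, of the mean-field control cost J^{MC}(x₀; v) = ½∫₀ᵀ (⟨Q̂(t)x_v(t), x_v(t)⟩ + ⟨R(t)v(t), v(t)⟩) dt + ½⟨Ĝ x_v(T), x_v(T)⟩, where x_v solves x_v' = 𝒜 x_v + ℬ v, x_v(0) = x₀. (Deterministic, zero-noise version of Theorem 4.1: the mean-field team consistency strategy coincides with the unique optimal control of the mean-field control problem.)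 -/
/-!
Subtracting the costate equations of det-(CC-MT) shows that `d = p - (p¹ + p²)` solves
`d' = -Aᵀ d` with `d T = 0`, so `p = p¹ + p²` by backward uniqueness. Then `p` is the costate of
the mean-field control problem: `p' = -(Q̂ x + 𝒜ᵀ p)`, `p T = Ĝ x T` and `R u + ℬᵀ p = 0`.
Differentiating `⟨p, xv - x⟩` along a competitor `(xv, v)` and integrating kills the cross terms
in the expansion of `J(xv, v)`, so `J(xv, v) = J(x, u) + J(xv - x, v - u)`. The last term is
nonnegative, and since `R ≥ ε` it is positive as soon as the continuous control `v - u` is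
nonzero somewhere.
-/

open Matrix Set

/-- The quadratic cost functional of the deterministic mean-field control problem,
with weights `Q̂`, `R`, `Ĝ`. -/
noncomputable def mcCost {n m : ℕ} (T : ℝ)
    (Qhat : ℝ → Matrix (Fin n) (Fin n) ℝ) (R : ℝ → Matrix (Fin m) (Fin m) ℝ)
    (Ghat : Matrix (Fin n) (Fin n) ℝ)
    (x : ℝ → Fin n → ℝ) (u : ℝ → Fin m → ℝ) : ℝ :=
  (1 / 2) * (∫ t in (0 : ℝ)..T, ((Qhat t *ᵥ x t) ⬝ᵥ x t + (R t *ᵥ u t) ⬝ᵥ u t))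
    + (1 / 2) * ((Ghat *ᵥ x T) ⬝ᵥ x T)

open MeasureTheory

section
variable {ι κ α : Type*} [Fintype ι]

theorem Matrix.IsSymm.transpose_mul_mul [CommSemiring α] {M : Matrix ι ι α} (hM : M.IsSymm)
    (N : Matrix ι κ α) : (Nᵀ * M * N).IsSymm := by
  simp only [IsSymm, transpose_mul, transpose_transpose, hM.eq, Matrix.mul_assoc]

theorem Matrix.transpose_one_sub_mul_mul_one_sub_s10 [DecidableEq ι] [CommRing α]
    (M N : Matrix ι ι α) : (1 - N)ᵀ * M * (1 - N) = M + (Nᵀ * M * N - Nᵀ * M - M * N) := by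
  simp only [transpose_sub, transpose_one]
  noncomm_ring

theorem Matrix.IsSymm.mulVec_add_dotProduct_add [CommSemiring α] {M : Matrix ι ι α} (hM : M.IsSymm)
    (a b : ι → α) :
    (M *ᵥ (a + b)) ⬝ᵥ (a + b) = (M *ᵥ a) ⬝ᵥ a + (M *ᵥ b) ⬝ᵥ b + 2 * ((M *ᵥ a) ⬝ᵥ b) := by
  have hba : (M *ᵥ b) ⬝ᵥ a = (M *ᵥ a) ⬝ᵥ b := by
    rw [dotProduct_comm, dotProduct_mulVec, ← mulVec_transpose, hM.eq]
  simp only [mulVec_add, add_dotProduct, dotProduct_add, hba]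
  ring

end

section
variable {α R : Type*} [TopologicalSpace α] [TopologicalSpace R] {ι κ : Type*} [Fintype κ]
  {s : Set α}

theorem ContinuousOn.dotProduct [Mul R] [AddCommMonoid R] [ContinuousAdd R] [ContinuousMul R]
    {f g : α → κ → R} (hf : ContinuousOn f s) (hg : ContinuousOn g s) :
    ContinuousOn (fun a => f a ⬝ᵥ g a) s := by
  rw [continuousOn_iff_continuous_domRestrict] at *
  exact hf.dotProduct hg

theorem ContinuousOn.matrix_mulVec [NonUnitalNonAssocSemiring R] [ContinuousAdd R]
    [ContinuousMul R] {M : α → Matrix ι κ R} {f : α → κ → R} (hM : ContinuousOn M s)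
    (hf : ContinuousOn f s) : ContinuousOn (fun a => M a *ᵥ f a) s := by
  rw [continuousOn_iff_continuous_domRestrict] at *
  exact hM.matrix_mulVec hf

end

section
variable {ι : Type*} [Fintype ι]

theorem HasDerivWithinAt.dotProduct {f g : ℝ → ι → ℝ} {f' g' : ι → ℝ} {s : Set ℝ} {t : ℝ}
    (hf : HasDerivWithinAt f f' s t) (hg : HasDerivWithinAt g g' s t) :
    HasDerivWithinAt (fun t => f t ⬝ᵥ g t) (f' ⬝ᵥ g t + f t ⬝ᵥ g') s t := by
  have h := HasDerivWithinAt.fun_sum (u := Finset.univ) fun i _ =>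
    (hasDerivWithinAt_pi.1 hf i).fun_mul (hasDerivWithinAt_pi.1 hg i)
  rw [Finset.sum_add_distrib] at h
  exact h

attribute [local instance] Matrix.linftyOpNormedAddCommGroup in
theorem eqOn_zero_of_hasDerivWithinAt_mulVec {a b : ℝ} {M : ℝ → Matrix ι ι ℝ}
    {d : ℝ → ι → ℝ} (hM : ContinuousOn M (Icc a b))
    (hd : ∀ t ∈ Icc a b, HasDerivWithinAt d (M t *ᵥ d t) (Icc a b) t) (hb : d b = 0) :
    EqOn d 0 (Icc a b) := by
  obtain ⟨C, hC⟩ := isCompact_Icc.exists_bound_of_continuousOn hM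
  have hlip : ∀ t ∈ Ioc a b, LipschitzOnWith C.toNNReal (fun q => M t *ᵥ q) univ := by
    refine fun t ht => (LipschitzWith.of_dist_le_mul fun q r => ?_).lipschitzOnWith
    rw [dist_eq_norm, dist_eq_norm, ← mulVec_sub]
    exact (linfty_opNorm_mulVec _ _).trans <| mul_le_mul_of_nonneg_right
      ((hC t (Ioc_subset_Icc_self ht)).trans (Real.le_coe_toNNReal C)) (norm_nonneg _)
  refine ODE_solution_unique_of_mem_Icc_left hlip
    (fun t ht => (hd t ht).continuousWithinAt)
    (fun t ht => (hd t (Ioc_subset_Icc_self ht)).mono_of_mem_nhdsWithin (Icc_mem_nhdsLE_of_mem ht))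
    (fun _ _ => mem_univ _) continuousOn_const
    (fun t _ => by rw [Pi.zero_apply, mulVec_zero]; exact hasDerivWithinAt_const t _ _)
    (fun _ _ => mem_univ _) hb

theorem ContinuousOn.integral_pos_of_nonneg_of_ne_zero {f : ℝ → ℝ} {a b c : ℝ} (hab : a < b)
    (hf : ContinuousOn f (Icc a b)) (hnonneg : ∀ t ∈ Icc a b, 0 ≤ f t) (hc : c ∈ Icc a b)
    (hfc : f c ≠ 0) : 0 < ∫ t in a..b, f t := by
  simpa using intervalIntegral.integral_lt_integral_of_continuousOn_of_le_of_exists_lt hab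
    continuousOn_const hf (fun t ht => hnonneg t (Ioc_subset_Icc_self ht))
    ⟨c, hc, (hnonneg c hc).lt_of_ne' hfc⟩

end

section
variable {ι κ : Type*} [Fintype ι] [Fintype κ]

theorem integral_cross_eq_neg_of_adjoint {T : ℝ} (hT : 0 ≤ T)
    {Acal Qh : ℝ → Matrix ι ι ℝ} {Bcal : ℝ → Matrix ι κ ℝ} {R : ℝ → Matrix κ κ ℝ}
    {Gh : Matrix ι ι ℝ} {x y p : ℝ → ι → ℝ} {u w : ℝ → κ → ℝ}
    (hQc : ContinuousOn Qh (Icc 0 T)) (hRc : ContinuousOn R (Icc 0 T))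
    (hxc : ContinuousOn x (Icc 0 T)) (huc : ContinuousOn u (Icc 0 T))
    (hwc : ContinuousOn w (Icc 0 T))
    (hy : ∀ t ∈ Icc 0 T, HasDerivWithinAt y (Acal t *ᵥ y t + Bcal t *ᵥ w t) (Icc 0 T) t)
    (hy0 : y 0 = 0)
    (hp : ∀ t ∈ Icc 0 T, HasDerivWithinAt p (-(Qh t *ᵥ x t + (Acal t)ᵀ *ᵥ p t)) (Icc 0 T) t)
    (hpT : p T = Gh *ᵥ x T) (hstat : ∀ t ∈ Icc 0 T, R t *ᵥ u t + (Bcal t)ᵀ *ᵥ p t = 0) :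
    ∫ t in (0 : ℝ)..T, ((Qh t *ᵥ x t) ⬝ᵥ y t + (R t *ᵥ u t) ⬝ᵥ w t) = -((Gh *ᵥ x T) ⬝ᵥ y T) := by
  have hpair : ∀ t ∈ Icc 0 T, HasDerivWithinAt (fun t => p t ⬝ᵥ y t)
      (-((Qh t *ᵥ x t) ⬝ᵥ y t + (R t *ᵥ u t) ⬝ᵥ w t)) (Icc 0 T) t := by
    refine fun t ht => ((hp t ht).dotProduct (hy t ht)).congr_deriv ?_
    rw [eq_neg_of_add_eq_zero_left (hstat t ht)]
    simp only [neg_dotProduct, add_dotProduct, dotProduct_add, dotProduct_mulVec,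
      mulVec_transpose]
    ring
  have hyc : ContinuousOn y (Icc 0 T) := fun t ht => (hy t ht).continuousWithinAt
  rw [← neg_eq_iff_eq_neg, ← intervalIntegral.integral_neg,
    intervalIntegral.integral_eq_sub_of_hasDerivAt_of_le hT
      (fun t ht => (hpair t ht).continuousWithinAt)
      (fun t ht => (hpair t (Ioo_subset_Icc_self ht)).hasDerivAt (Icc_mem_nhds ht.1 ht.2))
      (ContinuousOn.intervalIntegrable_of_Icc hT (((hQc.matrix_mulVec hxc).dotProduct hyc).add
        ((hRc.matrix_mulVec huc).dotProduct hwc)).neg),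
    hpT, hy0, dotProduct_zero, sub_zero]

end

section
variable {n m : ℕ} {T : ℝ} {Qh : ℝ → Matrix (Fin n) (Fin n) ℝ} {R : ℝ → Matrix (Fin m) (Fin m) ℝ}
  {Gh : Matrix (Fin n) (Fin n) ℝ}

theorem mcCost_add (hT : 0 ≤ T) (hQs : ∀ t, (Qh t).IsSymm) (hRs : ∀ t, (R t).IsSymm)
    (hGs : Gh.IsSymm) (hQc : ContinuousOn Qh (Icc 0 T)) (hRc : ContinuousOn R (Icc 0 T))
    {x y : ℝ → Fin n → ℝ} {u w : ℝ → Fin m → ℝ} (hxc : ContinuousOn x (Icc 0 T))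
    (hyc : ContinuousOn y (Icc 0 T)) (huc : ContinuousOn u (Icc 0 T))
    (hwc : ContinuousOn w (Icc 0 T)) :
    mcCost T Qh R Gh (x + y) (u + w) = mcCost T Qh R Gh x u + mcCost T Qh R Gh y w
      + ((∫ t in (0 : ℝ)..T, ((Qh t *ᵥ x t) ⬝ᵥ y t + (R t *ᵥ u t) ⬝ᵥ w t))
        + (Gh *ᵥ x T) ⬝ᵥ y T) := by
  have hform : ∀ {x' y' : ℝ → Fin n → ℝ} {u' w' : ℝ → Fin m → ℝ}, ContinuousOn x' (Icc 0 T) →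
      ContinuousOn y' (Icc 0 T) → ContinuousOn u' (Icc 0 T) → ContinuousOn w' (Icc 0 T) →
      IntervalIntegrable (fun t => (Qh t *ᵥ x' t) ⬝ᵥ y' t + (R t *ᵥ u' t) ⬝ᵥ w' t)
        volume 0 T :=
    fun hx' hy' hu' hw' => ContinuousOn.intervalIntegrable_of_Icc hT
      (((hQc.matrix_mulVec hx').dotProduct hy').add ((hRc.matrix_mulVec hu').dotProduct hw'))
  have hexpand : ∀ t, (Qh t *ᵥ (x + y) t) ⬝ᵥ (x + y) t + (R t *ᵥ (u + w) t) ⬝ᵥ (u + w) t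
      = ((Qh t *ᵥ x t) ⬝ᵥ x t + (R t *ᵥ u t) ⬝ᵥ u t)
        + ((Qh t *ᵥ y t) ⬝ᵥ y t + (R t *ᵥ w t) ⬝ᵥ w t)
        + 2 * ((Qh t *ᵥ x t) ⬝ᵥ y t + (R t *ᵥ u t) ⬝ᵥ w t) := fun t => by
    rw [Pi.add_apply, Pi.add_apply, (hQs t).mulVec_add_dotProduct_add,
      (hRs t).mulVec_add_dotProduct_add]
    ring
  unfold mcCost
  rw [intervalIntegral.integral_congr (fun t _ => hexpand t),
    intervalIntegral.integral_add ((hform hxc hxc huc huc).add (hform hyc hyc hwc hwc))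
      ((hform hxc hyc huc hwc).const_mul 2),
    intervalIntegral.integral_add (hform hxc hxc huc huc) (hform hyc hyc hwc hwc),
    intervalIntegral.integral_const_mul, Pi.add_apply, hGs.mulVec_add_dotProduct_add]
  ring

theorem mcCost_eq_add_mcCost_sub_of_adjoint (hT : 0 ≤ T) (hQs : ∀ t, (Qh t).IsSymm)
    (hRs : ∀ t, (R t).IsSymm) (hGs : Gh.IsSymm) (hQc : ContinuousOn Qh (Icc 0 T))
    (hRc : ContinuousOn R (Icc 0 T)) {Acal : ℝ → Matrix (Fin n) (Fin n) ℝ}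
    {Bcal : ℝ → Matrix (Fin n) (Fin m) ℝ} {x xv p : ℝ → Fin n → ℝ} {u v : ℝ → Fin m → ℝ}
    (huc : ContinuousOn u (Icc 0 T)) (hvc : ContinuousOn v (Icc 0 T))
    (hx : ∀ t ∈ Icc 0 T, HasDerivWithinAt x (Acal t *ᵥ x t + Bcal t *ᵥ u t) (Icc 0 T) t)
    (hxv : ∀ t ∈ Icc 0 T, HasDerivWithinAt xv (Acal t *ᵥ xv t + Bcal t *ᵥ v t) (Icc 0 T) t)
    (h0 : xv 0 = x 0)
    (hp : ∀ t ∈ Icc 0 T, HasDerivWithinAt p (-(Qh t *ᵥ x t + (Acal t)ᵀ *ᵥ p t)) (Icc 0 T) t)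
    (hpT : p T = Gh *ᵥ x T) (hstat : ∀ t ∈ Icc 0 T, R t *ᵥ u t + (Bcal t)ᵀ *ᵥ p t = 0) :
    mcCost T Qh R Gh xv v = mcCost T Qh R Gh x u + mcCost T Qh R Gh (xv - x) (v - u) := by
  have hxc : ContinuousOn x (Icc 0 T) := fun t ht => (hx t ht).continuousWithinAt
  have hxvc : ContinuousOn xv (Icc 0 T) := fun t ht => (hxv t ht).continuousWithinAt
  have hy : ∀ t ∈ Icc 0 T, HasDerivWithinAt (xv - x)
      (Acal t *ᵥ (xv - x) t + Bcal t *ᵥ (v - u) t) (Icc 0 T) t := by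
    refine fun t ht => ((hxv t ht).sub (hx t ht)).congr_deriv ?_
    simp only [Pi.sub_apply, mulVec_sub]
    abel
  have hcross := integral_cross_eq_neg_of_adjoint hT hQc hRc hxc huc (hvc.sub huc) hy
    (by rw [Pi.sub_apply, h0, sub_self]) hp hpT hstat
  have hsplit := mcCost_add hT hQs hRs hGs hQc hRc hxc (hxvc.sub hxc) huc (hvc.sub huc)
  rw [add_sub_cancel, add_sub_cancel, hcross, neg_add_cancel, add_zero] at hsplit
  exact hsplit

theorem mcCost_nonneg (hT : 0 ≤ T) (hQ : ∀ t ∈ Icc 0 T, ∀ z, 0 ≤ (Qh t *ᵥ z) ⬝ᵥ z)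
    (hR : ∀ t ∈ Icc 0 T, ∀ z, 0 ≤ (R t *ᵥ z) ⬝ᵥ z) (hG : ∀ z, 0 ≤ (Gh *ᵥ z) ⬝ᵥ z)
    (x : ℝ → Fin n → ℝ) (u : ℝ → Fin m → ℝ) : 0 ≤ mcCost T Qh R Gh x u := by
  unfold mcCost
  have hrun := intervalIntegral.integral_nonneg (μ := volume) hT
    fun t ht => add_nonneg (hQ t ht (x t)) (hR t ht (u t))
  have hterm := hG (x T)
  positivity

theorem mcCost_pos (hT : 0 < T) (hQc : ContinuousOn Qh (Icc 0 T))
    (hRc : ContinuousOn R (Icc 0 T)) (hQ : ∀ t ∈ Icc 0 T, ∀ z, 0 ≤ (Qh t *ᵥ z) ⬝ᵥ z)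
    {ε : ℝ} (hε : 0 < ε) (hR : ∀ t ∈ Icc 0 T, ∀ z, ε * (z ⬝ᵥ z) ≤ (R t *ᵥ z) ⬝ᵥ z)
    (hG : ∀ z, 0 ≤ (Gh *ᵥ z) ⬝ᵥ z) {x : ℝ → Fin n → ℝ} {u : ℝ → Fin m → ℝ}
    (hxc : ContinuousOn x (Icc 0 T)) (huc : ContinuousOn u (Icc 0 T)) {c : ℝ}
    (hc : c ∈ Icc 0 T) (hu : u c ≠ 0) : 0 < mcCost T Qh R Gh x u := by
  have hlower : ∀ t ∈ Icc 0 T, ε * (u t ⬝ᵥ u t) ≤ (Qh t *ᵥ x t) ⬝ᵥ x t + (R t *ᵥ u t) ⬝ᵥ u t :=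
    fun t ht => (hR t ht (u t)).trans (le_add_of_nonneg_left (hQ t ht (x t)))
  have hpos : 0 < ε * (u c ⬝ᵥ u c) :=
    mul_pos hε <| (dotProduct_self_star_nonneg (u c)).lt_of_ne' (dotProduct_self_eq_zero.not.2 hu)
  have hrun := ContinuousOn.integral_pos_of_nonneg_of_ne_zero hT
    (((hQc.matrix_mulVec hxc).dotProduct hxc).add ((hRc.matrix_mulVec huc).dotProduct huc))
    (fun t ht => (mul_nonneg hε.le (dotProduct_self_star_nonneg (u t))).trans (hlower t ht)) hc
    (hpos.trans_le (hlower c hc)).ne'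
  have hterm := hG (x T)
  unfold mcCost
  positivity

end

theorem mcAdjoint_of_consistency {n m : ℕ} {T : ℝ} {A Abar Q Γ₁ : ℝ → Matrix (Fin n) (Fin n) ℝ}
    {B Bbar : ℝ → Matrix (Fin n) (Fin m) ℝ} {R : ℝ → Matrix (Fin m) (Fin m) ℝ}
    {G Γ₂ : Matrix (Fin n) (Fin n) ℝ} {x p p1 p2 : ℝ → Fin n → ℝ} {u : ℝ → Fin m → ℝ}
    (hA : ContinuousOn A (Icc 0 T))
    (hp1 : ∀ t ∈ Icc (0 : ℝ) T,
      HasDerivWithinAt p1 (-(Q t *ᵥ x t + (A t)ᵀ *ᵥ p1 t)) (Icc 0 T) t)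
    (hp1T : p1 T = G *ᵥ x T)
    (hp2 : ∀ t ∈ Icc (0 : ℝ) T,
      HasDerivWithinAt p2
        (-(((Γ₁ t)ᵀ * Q t * Γ₁ t - (Γ₁ t)ᵀ * Q t - Q t * Γ₁ t) *ᵥ x t
          + (Abar t)ᵀ *ᵥ p1 t + (A t + Abar t)ᵀ *ᵥ p2 t)) (Icc 0 T) t)
    (hp2T : p2 T = (Γ₂ᵀ * G * Γ₂ - Γ₂ᵀ * G - G * Γ₂) *ᵥ x T)
    (hp : ∀ t ∈ Icc (0 : ℝ) T,
      HasDerivWithinAt p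
        (-(((1 - Γ₁ t)ᵀ * Q t * (1 - Γ₁ t)) *ᵥ x t + (A t)ᵀ *ᵥ p t
          + (Abar t)ᵀ *ᵥ (p1 t + p2 t))) (Icc 0 T) t)
    (hpT : p T = ((1 - Γ₂)ᵀ * G * (1 - Γ₂)) *ᵥ x T)
    (hstat : ∀ t ∈ Icc (0 : ℝ) T,
      R t *ᵥ u t + (B t)ᵀ *ᵥ p t + (Bbar t)ᵀ *ᵥ (p1 t + p2 t) = 0) :
    (∀ t ∈ Icc (0 : ℝ) T, HasDerivWithinAt p
      (-(((1 - Γ₁ t)ᵀ * Q t * (1 - Γ₁ t)) *ᵥ x t + (A t + Abar t)ᵀ *ᵥ p t)) (Icc 0 T) t) ∧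
    ∀ t ∈ Icc (0 : ℝ) T, R t *ᵥ u t + (B t + Bbar t)ᵀ *ᵥ p t = 0 := by
  have hsum : ∀ t ∈ Icc (0 : ℝ) T, p1 t + p2 t = p t := by
    have hzero := eqOn_zero_of_hasDerivWithinAt_mulVec (M := fun t => -(A t)ᵀ)
      (d := p - (p1 + p2)) (by fun_prop) (fun t ht => ?_) ?_
    · exact fun t ht => (sub_eq_zero.1 (hzero ht)).symm
    · refine ((hp t ht).sub ((hp1 t ht).add (hp2 t ht))).congr_deriv ?_
      rw [transpose_one_sub_mul_mul_one_sub_s10]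
      simp only [Pi.sub_apply, Pi.add_apply, add_mulVec, sub_mulVec, neg_mulVec, transpose_add,
        mulVec_add, mulVec_sub]
      abel
    · rw [Pi.sub_apply, Pi.add_apply, hpT, hp1T, hp2T, transpose_one_sub_mul_mul_one_sub_s10,
        add_mulVec]
      exact sub_self _
  refine ⟨fun t ht => (hp t ht).congr_deriv ?_, fun t ht => ?_⟩
  · rw [hsum t ht, transpose_add, add_mulVec, add_assoc]
  · rw [← hstat t ht, hsum t ht, transpose_add, add_mulVec, add_assoc]

theorem stmt_10_general {n m : ℕ} (T : ℝ) (hT : 0 < T) (x₀ : Fin n → ℝ)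
    (A Abar Q Γ₁ : ℝ → Matrix (Fin n) (Fin n) ℝ)
    (B Bbar : ℝ → Matrix (Fin n) (Fin m) ℝ)
    (R : ℝ → Matrix (Fin m) (Fin m) ℝ)
    (hA : ContinuousOn A (Icc 0 T))
    (hQ : ContinuousOn Q (Icc 0 T)) (hΓ₁ : ContinuousOn Γ₁ (Icc 0 T))
    (hR : ContinuousOn R (Icc 0 T))
    (hQsymm : ∀ t, (Q t)ᵀ = Q t) (hRsymm : ∀ t, (R t)ᵀ = R t)
    (G Γ₂ : Matrix (Fin n) (Fin n) ℝ) (hGsymm : Gᵀ = G)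
    -- positivity assumptions on Q̂ = (I−Γ₁)ᵀQ(I−Γ₁), Ĝ = (I−Γ₂)ᵀG(I−Γ₂), R
    (hQpos : ∀ t ∈ Icc (0 : ℝ) T, ∀ v : Fin n → ℝ,
      0 ≤ (((1 - Γ₁ t)ᵀ * Q t * (1 - Γ₁ t)) *ᵥ v) ⬝ᵥ v)
    (hGpos : ∀ v : Fin n → ℝ, 0 ≤ (((1 - Γ₂)ᵀ * G * (1 - Γ₂)) *ᵥ v) ⬝ᵥ v)
    (ε : ℝ) (hε : 0 < ε)
    (hRpos : ∀ t ∈ Icc (0 : ℝ) T, ∀ w : Fin m → ℝ, ε * (w ⬝ᵥ w) ≤ (R t *ᵥ w) ⬝ᵥ w)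
    -- (x, u, p, p¹, p²) solves det-(CC-MT)
    (x p p1 p2 : ℝ → Fin n → ℝ) (u : ℝ → Fin m → ℝ)
    (hu : ContinuousOn u (Icc 0 T))
    (hx0 : x 0 = x₀)
    (hx : ∀ t ∈ Icc (0 : ℝ) T,
      HasDerivWithinAt x ((A t + Abar t) *ᵥ x t + (B t + Bbar t) *ᵥ u t) (Icc 0 T) t)
    (hp1 : ∀ t ∈ Icc (0 : ℝ) T,
      HasDerivWithinAt p1 (-(Q t *ᵥ x t + (A t)ᵀ *ᵥ p1 t)) (Icc 0 T) t)
    (hp1T : p1 T = G *ᵥ x T)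
    (hp2 : ∀ t ∈ Icc (0 : ℝ) T,
      HasDerivWithinAt p2
        (-(((Γ₁ t)ᵀ * Q t * Γ₁ t - (Γ₁ t)ᵀ * Q t - Q t * Γ₁ t) *ᵥ x t
          + (Abar t)ᵀ *ᵥ p1 t + (A t + Abar t)ᵀ *ᵥ p2 t)) (Icc 0 T) t)
    (hp2T : p2 T = (Γ₂ᵀ * G * Γ₂ - Γ₂ᵀ * G - G * Γ₂) *ᵥ x T)
    (hp : ∀ t ∈ Icc (0 : ℝ) T,
      HasDerivWithinAt p
        (-(((1 - Γ₁ t)ᵀ * Q t * (1 - Γ₁ t)) *ᵥ x t + (A t)ᵀ *ᵥ p t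
          + (Abar t)ᵀ *ᵥ (p1 t + p2 t))) (Icc 0 T) t)
    (hpT : p T = ((1 - Γ₂)ᵀ * G * (1 - Γ₂)) *ᵥ x T)
    (hstat : ∀ t ∈ Icc (0 : ℝ) T,
      R t *ᵥ u t + (B t)ᵀ *ᵥ p t + (Bbar t)ᵀ *ᵥ (p1 t + p2 t) = 0) :
    -- conclusion: u is the unique minimizer of J^{MC}(x₀; ·)
    ∀ (v : ℝ → Fin m → ℝ) (xv : ℝ → Fin n → ℝ),
      ContinuousOn v (Icc 0 T) → xv 0 = x₀ →
      (∀ t ∈ Icc (0 : ℝ) T,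
        HasDerivWithinAt xv ((A t + Abar t) *ᵥ xv t + (B t + Bbar t) *ᵥ v t) (Icc 0 T) t) →
      mcCost T (fun t => (1 - Γ₁ t)ᵀ * Q t * (1 - Γ₁ t)) R ((1 - Γ₂)ᵀ * G * (1 - Γ₂)) x u
        ≤ mcCost T (fun t => (1 - Γ₁ t)ᵀ * Q t * (1 - Γ₁ t)) R ((1 - Γ₂)ᵀ * G * (1 - Γ₂)) xv v ∧
      (mcCost T (fun t => (1 - Γ₁ t)ᵀ * Q t * (1 - Γ₁ t)) R ((1 - Γ₂)ᵀ * G * (1 - Γ₂)) xv v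
          = mcCost T (fun t => (1 - Γ₁ t)ᵀ * Q t * (1 - Γ₁ t)) R ((1 - Γ₂)ᵀ * G * (1 - Γ₂)) x u →
        ∀ t ∈ Icc (0 : ℝ) T, v t = u t) := by
  intro v xv hv hxv0 hxv
  obtain ⟨hadj, hstat'⟩ := mcAdjoint_of_consistency hA hp1 hp1T hp2 hp2T hp hpT hstat
  have hQc : ContinuousOn (fun t => (1 - Γ₁ t)ᵀ * Q t * (1 - Γ₁ t)) (Icc 0 T) := by fun_prop
  have hcost := mcCost_eq_add_mcCost_sub_of_adjoint hT.le
    (fun t => IsSymm.transpose_mul_mul (hQsymm t) _) hRsymm (IsSymm.transpose_mul_mul hGsymm _)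
    hQc hR hu hv hx hxv (hxv0.trans hx0.symm) hadj hpT hstat'
  refine ⟨?_, fun heq t ht => ?_⟩
  · have hRnonneg : ∀ t ∈ Icc (0 : ℝ) T, ∀ w : Fin m → ℝ, 0 ≤ (R t *ᵥ w) ⬝ᵥ w :=
      fun t ht w => (mul_nonneg hε.le (dotProduct_self_star_nonneg w)).trans (hRpos t ht w)
    linarith [mcCost_nonneg hT.le hQpos hRnonneg hGpos (xv - x) (v - u)]
  · by_contra hne
    have hxvx : ContinuousOn (xv - x) (Icc 0 T) := fun s hs =>
      (hxv s hs).continuousWithinAt.sub (hx s hs).continuousWithinAt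
    linarith [mcCost_pos hT hQc hR hQpos hε hRpos hGpos hxvx (hv.sub hu) ht (sub_ne_zero.2 hne)]

/-- Deterministic (zero-noise) version of Theorem 4.1: if `(x, u, p, p¹, p²)` solves the
consistency system det-(CC-MT) of the mean-field team problem, then `u` is the unique
minimizer of the mean-field control cost `J^{MC}(x₀; ·)` over continuous controls. -/
theorem stmt_10 {n m : ℕ} (T : ℝ) (hT : 0 < T) (x₀ : Fin n → ℝ)
    (A Abar Q Γ₁ : ℝ → Matrix (Fin n) (Fin n) ℝ)
    (B Bbar : ℝ → Matrix (Fin n) (Fin m) ℝ)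
    (R : ℝ → Matrix (Fin m) (Fin m) ℝ)
    (hA : ContinuousOn A (Icc 0 T)) (hAbar : ContinuousOn Abar (Icc 0 T))
    (hQ : ContinuousOn Q (Icc 0 T)) (hΓ₁ : ContinuousOn Γ₁ (Icc 0 T))
    (hB : ContinuousOn B (Icc 0 T)) (hBbar : ContinuousOn Bbar (Icc 0 T))
    (hR : ContinuousOn R (Icc 0 T))
    (hQsymm : ∀ t, (Q t)ᵀ = Q t) (hRsymm : ∀ t, (R t)ᵀ = R t)
    (G Γ₂ : Matrix (Fin n) (Fin n) ℝ) (hGsymm : Gᵀ = G)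
    -- positivity assumptions on Q̂ = (I−Γ₁)ᵀQ(I−Γ₁), Ĝ = (I−Γ₂)ᵀG(I−Γ₂), R
    (hQpos : ∀ t ∈ Icc (0 : ℝ) T, ∀ v : Fin n → ℝ,
      0 ≤ (((1 - Γ₁ t)ᵀ * Q t * (1 - Γ₁ t)) *ᵥ v) ⬝ᵥ v)
    (hGpos : ∀ v : Fin n → ℝ, 0 ≤ (((1 - Γ₂)ᵀ * G * (1 - Γ₂)) *ᵥ v) ⬝ᵥ v)
    (ε : ℝ) (hε : 0 < ε)
    (hRpos : ∀ t ∈ Icc (0 : ℝ) T, ∀ w : Fin m → ℝ, ε * (w ⬝ᵥ w) ≤ (R t *ᵥ w) ⬝ᵥ w)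
    -- (x, u, p, p¹, p²) solves det-(CC-MT)
    (x p p1 p2 : ℝ → Fin n → ℝ) (u : ℝ → Fin m → ℝ)
    (hu : ContinuousOn u (Icc 0 T))
    (hx0 : x 0 = x₀)
    (hx : ∀ t ∈ Icc (0 : ℝ) T,
      HasDerivWithinAt x ((A t + Abar t) *ᵥ x t + (B t + Bbar t) *ᵥ u t) (Icc 0 T) t)
    (hp1 : ∀ t ∈ Icc (0 : ℝ) T,
      HasDerivWithinAt p1 (-(Q t *ᵥ x t + (A t)ᵀ *ᵥ p1 t)) (Icc 0 T) t)
    (hp1T : p1 T = G *ᵥ x T)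
    (hp2 : ∀ t ∈ Icc (0 : ℝ) T,
      HasDerivWithinAt p2
        (-(((Γ₁ t)ᵀ * Q t * Γ₁ t - (Γ₁ t)ᵀ * Q t - Q t * Γ₁ t) *ᵥ x t
          + (Abar t)ᵀ *ᵥ p1 t + (A t + Abar t)ᵀ *ᵥ p2 t)) (Icc 0 T) t)
    (hp2T : p2 T = (Γ₂ᵀ * G * Γ₂ - Γ₂ᵀ * G - G * Γ₂) *ᵥ x T)
    (hp : ∀ t ∈ Icc (0 : ℝ) T,
      HasDerivWithinAt p
        (-(((1 - Γ₁ t)ᵀ * Q t * (1 - Γ₁ t)) *ᵥ x t + (A t)ᵀ *ᵥ p t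
          + (Abar t)ᵀ *ᵥ (p1 t + p2 t))) (Icc 0 T) t)
    (hpT : p T = ((1 - Γ₂)ᵀ * G * (1 - Γ₂)) *ᵥ x T)
    (hstat : ∀ t ∈ Icc (0 : ℝ) T,
      R t *ᵥ u t + (B t)ᵀ *ᵥ p t + (Bbar t)ᵀ *ᵥ (p1 t + p2 t) = 0) :
    -- conclusion: u is the unique minimizer of J^{MC}(x₀; ·)
    ∀ (v : ℝ → Fin m → ℝ) (xv : ℝ → Fin n → ℝ),
      ContinuousOn v (Icc 0 T) → xv 0 = x₀ →
      (∀ t ∈ Icc (0 : ℝ) T,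
        HasDerivWithinAt xv ((A t + Abar t) *ᵥ xv t + (B t + Bbar t) *ᵥ v t) (Icc 0 T) t) →
      mcCost T (fun t => (1 - Γ₁ t)ᵀ * Q t * (1 - Γ₁ t)) R ((1 - Γ₂)ᵀ * G * (1 - Γ₂)) x u
        ≤ mcCost T (fun t => (1 - Γ₁ t)ᵀ * Q t * (1 - Γ₁ t)) R ((1 - Γ₂)ᵀ * G * (1 - Γ₂)) xv v ∧
      (mcCost T (fun t => (1 - Γ₁ t)ᵀ * Q t * (1 - Γ₁ t)) R ((1 - Γ₂)ᵀ * G * (1 - Γ₂)) xv v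
          = mcCost T (fun t => (1 - Γ₁ t)ᵀ * Q t * (1 - Γ₁ t)) R ((1 - Γ₂)ᵀ * G * (1 - Γ₂)) x u →
        ∀ t ∈ Icc (0 : ℝ) T, v t = u t) :=
  stmt_10_general T hT x₀ A Abar Q Γ₁ B Bbar R hA hQ hΓ₁ hR hQsymm hRsymm G Γ₂ hGsymm hQpos hGpos ε
    hε hRpos x p p1 p2 u hu hx0 hx hp1 hp1T hp2 hp2T hp hpT hstat
end
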